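/- arXiv:2402.08062 — 3 statements merged into one kernel-verified Lean document; each statement's English description precedes it below -/
import Mathlib

section
/- Fix an integer f ≥ 1, a constant L ∈ (0,1], and a bit string a = (a_1,…,a_ف) ∈ {0,1}^f, and let μ_{f,a} be the associated payoff function on [0,1] × {0,1}. Define the mentor policy π^m : [0,1] → {0,1} by π^m(x) = a_{j(x)}. Then μ_{f,a} and π^m satisfy local generalization with constant 2L: for all x, x' ∈ [0,1], |μ_{f,a}(x, π^m(x)) − μ_{f,a}(x, π^m(x'))| ≤ 2L·|x − x'|. -/
/-- The section index `j(x)`: `j(x) = ⌈f·x⌉` for `x ∈ (0,1]` and `j(0) = 1`. -/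
noncomputable def sectionIdx (f : ℕ) (x : ℝ) : ℕ := max 1 ⌈(f : ℝ) * x⌉₊

/-- The midpoint `m_j = (j - 1/2)/f` of section `X_j = [(j-1)/f, j/f]`. -/
noncomputable def sectionMid (f j : ℕ) : ℝ := ((j : ℝ) - 1/2) / f

/-- The hard-instance payoff function `μ_{f,a}`: payoff 1 for the optimal action
`a_{j(x)}`, and `1 - L(1/(2f) - |m_{j(x)} - x|)` for the wrong action. -/
noncomputable def hardPayoff (f : ℕ) (L : ℝ) (a : ℕ → Bool) (x : ℝ) (y : Bool) : ℝ :=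
  if y = a (sectionIdx f x) then 1
  else 1 - L * (1 / (2 * f) - |sectionMid f (sectionIdx f x) - x|)

lemma one_le_sectionIdx (f : ℕ) (x : ℝ) : 1 ≤ sectionIdx f x := le_max_left _ _

lemma mem_section (f : ℕ) (hf : 1 ≤ f) {x : ℝ} (hx : 0 ≤ x) :
    ((sectionIdx f x : ℝ) - 1) / f ≤ x ∧ x ≤ (sectionIdx f x : ℝ) / f := by
  have hf' : (0:ℝ) < f := by exact_mod_cast hf.trans_lt' Nat.zero_lt_one
  rcases eq_or_lt_of_le hx with h0 | h0
  · have hj : sectionIdx f x = 1 := by simp [sectionIdx, ← h0]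
    rw [hj]
    constructor
    · rw [div_le_iff₀ hf']; push_cast; nlinarith
    · rw [le_div_iff₀ hf']; push_cast; nlinarith
  · have hfx : 0 < (f:ℝ) * x := by positivity
    have hj : sectionIdx f x = ⌈(f:ℝ)*x⌉₊ :=
      max_eq_right (Nat.one_le_ceil_iff.mpr hfx)
    rw [hj]
    have h1 := Nat.le_ceil ((f:ℝ)*x)
    have h2 := Nat.ceil_lt_add_one hfx.le
    constructor
    · rw [div_le_iff₀ hf']; nlinarith
    · rw [le_div_iff₀ hf']; nlinarith

lemma sectionIdx_eq (f : ℕ) (hf : 1 ≤ f) {x : ℝ} {j : ℕ} (hj : 1 ≤ j)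
    (h1 : ((j:ℝ) - 1) / f < x) (h2 : x ≤ (j:ℝ) / f) : sectionIdx f x = j := by
  have hf' : (0:ℝ) < f := by exact_mod_cast hf.trans_lt' Nat.zero_lt_one
  have h1j : (1:ℝ) ≤ j := by exact_mod_cast hj
  have hx : 0 < x := lt_of_le_of_lt (div_nonneg (by linarith) hf'.le) h1
  have hc : ⌈(f:ℝ) * x⌉₊ = j := by
    rw [Nat.ceil_eq_iff (by omega)]
    constructor
    · rw [Nat.cast_sub hj, Nat.cast_one]
      rw [div_lt_iff₀ hf'] at h1; nlinarith
    · rw [le_div_iff₀ hf'] at h2; nlinarith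
  rw [sectionIdx, hc, max_eq_right hj]

/-- `μ_{f,a}` together with the mentor policy `π^m(x) = a_{j(x)}` satisfies local
generalization with constant `2L`. -/
theorem stmt_7 (f : ℕ) (hf : 1 ≤ f) (L : ℝ) (hL : L ∈ Set.Ioc (0 : ℝ) 1)
    (a : ℕ → Bool) (πm : ℝ → Bool) (hπm : ∀ x, πm x = a (sectionIdx f x)) :
    ∀ x ∈ Set.Icc (0 : ℝ) 1, ∀ x' ∈ Set.Icc (0 : ℝ) 1,
      |hardPayoff f L a x (πm x) - hardPayoff f L a x (πm x')| ≤ 2 * L * |x - x'| := by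
  rintro x ⟨hx0, hx1⟩ x' ⟨hx'0, hx'1⟩
  have hf' : (0:ℝ) < f := by exact_mod_cast hf.trans_lt' Nat.zero_lt_one
  have hL0 := hL.1
  rw [hπm, hπm]
  set j := sectionIdx f x with hjdef
  set j' := sectionIdx f x' with hj'def
  have hμ1 : hardPayoff f L a x (a j) = 1 := by
    rw [hardPayoff, if_pos rfl]
  by_cases hb : a j' = a j
  · rw [hb, hμ1]
    simp only [sub_self, abs_zero]
    positivity
  · have hjj' : j ≠ j' := fun h => hb (by rw [h])
    have hμ2 : hardPayoff f L a x (a j') =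
        1 - L * (1 / (2 * f) - |sectionMid f j - x|) := by
      rw [hardPayoff, if_neg hb]
    rw [hμ1, hμ2]
    have hsec := mem_section f hf hx0
    set l : ℝ := ((j:ℝ) - 1) / f with hl
    set r : ℝ := (j:ℝ) / f with hr
    have hml : sectionMid f j - l = 1 / (2 * f) := by
      rw [sectionMid, hl]; field_simp; ring
    have hmr : r - sectionMid f j = 1 / (2 * f) := by
      rw [sectionMid, hr]; field_simp; ring
    set q : ℝ := 1 / (2 * f) - |sectionMid f j - x| with hq
    have habs : |sectionMid f j - x| ≤ 1 / (2 * f) := by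
      rw [abs_le]
      constructor <;> nlinarith [hsec.1, hsec.2]
    have hq0 : 0 ≤ q := by rw [hq]; linarith
    have hq1 : q ≤ x - l := by
      have := le_abs_self (sectionMid f j - x)
      rw [hq]; nlinarith
    have hq2 : q ≤ r - x := by
      have := neg_abs_le (sectionMid f j - x)
      rw [hq]; nlinarith
    -- x' is outside (l, r]
    have hout : x' ≤ l ∨ r < x' := by
      by_contra h
      push_neg at h
      exact hjj' (sectionIdx_eq f hf (one_le_sectionIdx f x) h.1 h.2).symm
    have hqd : q ≤ |x - x'| := by
      rcases hout with h | h
      · calc q ≤ x - l := hq1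
          _ ≤ x - x' := by linarith
          _ ≤ |x - x'| := le_abs_self _
      · calc q ≤ r - x := hq2
          _ ≤ x' - x := by linarith
          _ ≤ |x - x'| := by rw [abs_sub_comm]; exact le_abs_self _
    have : |1 - (1 - L * q)| = L * q := by
      rw [show (1:ℝ) - (1 - L * q) = L * q by ring, abs_of_nonneg (by positivity)]
    rw [this]
    nlinarith [abs_nonneg (x - x')]
end

section
/- Let Y be a set, let K ≥ 1 be an integer, and let π : ℝ → Y be a function for which there exists a partition of ℝ into K intervals (order-convex sets) I_1,…,I_K such that π is constant on each I_k. Let 𝓑 be a finite family of nondegenerate closed bounded intervals in ℝ such that (i) any two distinct members of 𝓑 intersect in at most one point, and (ii) every B ∈ 𝓑 contains two points x, x' with π(x) ≠ π(x'). Then |𝓑| ≤ K − 1. -/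
/-- Combinatorial content of Lemma 'pos-1d-bad-buckets': if `π : ℝ → Y` is constant on
each part of a partition of `ℝ` into `K` intervals, and `𝓑` is a finite family of
nondegenerate closed bounded intervals (given by their endpoints), any two of which
intersect in at most one point, each containing two points on which `π` disagrees,
then `|𝓑| ≤ K - 1`. -/
theorem stmt_9 (Y : Type*) (K : ℕ) (hK : 1 ≤ K) (π : ℝ → Y)
    (I : Fin K → Set ℝ)
    (hconv : ∀ k, (I k).OrdConnected)
    (hdisj : ∀ k l, k ≠ l → Disjoint (I k) (I l))
    (hcover : (⋃ k, I k) = Set.univ)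
    (hconst : ∀ k, ∀ x ∈ I k, ∀ x' ∈ I k, π x = π x')
    (B : Finset (ℝ × ℝ))
    (hnd : ∀ p ∈ B, p.1 < p.2)
    (hint : ∀ p ∈ B, ∀ q ∈ B, p ≠ q →
      (Set.Icc p.1 p.2 ∩ Set.Icc q.1 q.2).Subsingleton)
    (hbad : ∀ p ∈ B, ∃ x ∈ Set.Icc p.1 p.2, ∃ x' ∈ Set.Icc p.1 p.2, π x ≠ π x') :
    B.card ≤ K - 1 := by
  classical
  -- the segment index of each point
  have hgex : ∀ x : ℝ, ∃ k, x ∈ I k := by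
    intro x
    have hx : x ∈ ⋃ k, I k := by rw [hcover]; trivial
    simpa using hx
  choose g hgmem using hgex
  have guniq : ∀ (x : ℝ) (k : Fin K), x ∈ I k → g x = k := by
    intro x k hx
    by_contra h
    exact Set.disjoint_left.mp (hdisj _ _ h) (hgmem x) hx
  -- constancy of π along equal indices
  have hπ : ∀ u v : ℝ, g u = g v → π u = π v := by
    intro u v huv
    refine hconst (g u) u (hgmem u) v ?_
    rw [huv]; exact hgmem v
  -- convexity of indices
  have gmono : ∀ a b c : ℝ, a ≤ b → b ≤ c → g a = g c → g b = g a := by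
    intro a b c hab hbc hac
    refine guniq b (g a) ?_
    have hc : c ∈ I (g a) := by rw [hac]; exact hgmem c
    exact (hconv (g a)).out (hgmem a) hc ⟨hab, hbc⟩
  rcases B.eq_empty_or_nonempty with hB | hB
  · simp [hB]
  -- witnesses
  choose u hu v hv hne using hbad
  -- normalized witnesses: x < y
  set x : ∀ p ∈ B, ℝ := fun p hp => min (u p hp) (v p hp) with hxdef
  set y : ∀ p ∈ B, ℝ := fun p hp => max (u p hp) (v p hp) with hydef
  have hxmem : ∀ p (hp : p ∈ B), x p hp ∈ Set.Icc p.1 p.2 := by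
    intro p hp
    rcases min_cases (u p hp) (v p hp) with ⟨h, _⟩ | ⟨h, _⟩ <;>
      simp only [hxdef, h] <;> [exact hu p hp; exact hv p hp]
  have hymem : ∀ p (hp : p ∈ B), y p hp ∈ Set.Icc p.1 p.2 := by
    intro p hp
    rcases max_cases (u p hp) (v p hp) with ⟨h, _⟩ | ⟨h, _⟩ <;>
      simp only [hydef, h] <;> [exact hu p hp; exact hv p hp]
  have hxy : ∀ p (hp : p ∈ B), x p hp ≤ y p hp := fun p hp => min_le_max
  have hπxy : ∀ p (hp : p ∈ B), π (x p hp) ≠ π (y p hp) := by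
    intro p hp
    rcases le_total (u p hp) (v p hp) with h | h
    · simpa [hxdef, hydef, min_eq_left h, max_eq_right h] using hne p hp
    · simpa [hxdef, hydef, min_eq_right h, max_eq_left h] using (hne p hp).symm
  -- a point beyond all intervals
  set M : ℝ := B.sup' hB (fun p => p.2) with hM
  have hM2 : ∀ p ∈ B, p.2 ≤ M := fun p hp => Finset.le_sup' _ hp
  -- the map
  set φ : ℝ × ℝ → Fin K := fun p => if hp : p ∈ B then g (x p hp) else g M with hφ
  -- φ never equals g M
  have hφne : ∀ p ∈ B, φ p ≠ g M := by
    intro p hp hcontra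
    have hx2 : x p hp ≤ y p hp := hxy p hp
    have hy2 : y p hp ≤ M := le_trans (hymem p hp).2 (hM2 p hp)
    have : g (y p hp) = g (x p hp) := by
      refine gmono _ _ _ hx2 hy2 ?_
      simpa [hφ, hp] using hcontra
    exact hπxy p hp (hπ _ _ this.symm)
  -- φ is injective on B
  have hinj : Set.InjOn φ B := by
    intro p hp q hq hpq
    by_contra hne'
    -- key: if p,q distinct, one is entirely left of the other
    have key : ∀ r ∈ B, ∀ s ∈ B, r ≠ s → r.1 < s.1 → r.2 ≤ s.1 := by
      intro r hr s hs hrs h1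
      by_contra h
      push_neg at h
      have hsub := hint r hr s hs hrs
      have ha : s.1 ∈ Set.Icc r.1 r.2 ∩ Set.Icc s.1 s.2 :=
        ⟨⟨le_of_lt h1, le_of_lt h⟩, ⟨le_refl _, le_of_lt (hnd s hs)⟩⟩
      have hb : min r.2 s.2 ∈ Set.Icc r.1 r.2 ∩ Set.Icc s.1 s.2 := by
        constructor
        · exact ⟨le_trans (le_of_lt h1) (le_min (le_of_lt h) (le_of_lt (hnd s hs))), min_le_left _ _⟩
        · exact ⟨le_min (le_of_lt h) (le_of_lt (hnd s hs)), min_le_right _ _⟩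
      have := hsub ha hb
      have h2 : s.1 < min r.2 s.2 := lt_min h (hnd s hs)
      exact absurd this (ne_of_lt h2)
    -- WLOG handler: derive contradiction when r left of s with same φ value
    have main : ∀ r (hr : r ∈ B) s (hs : s ∈ B), r ≠ s → r.2 ≤ s.1 →
        φ r = φ s → False := by
      intro r hr s hs hrs hle hφeq
      have h1 : x r hr ≤ y r hr := hxy r hr
      have h2 : y r hr ≤ x s hs :=
        le_trans (hymem r hr).2 (le_trans hle (hxmem s hs).1)
      have hgeq : g (x r hr) = g (x s hs) := by simpa [hφ, hr, hs] using hφeq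
      have : g (y r hr) = g (x r hr) := gmono _ _ _ h1 h2 hgeq
      exact hπxy r hr (hπ _ _ this.symm)
    rcases lt_trichotomy p.1 q.1 with h | h | h
    · exact main p hp q hq hne' (key p hp q hq hne' h) hpq
    · -- equal left endpoints: impossible since interiors overlap
      have hsub := hint p hp q hq hne'
      have ha : p.1 ∈ Set.Icc p.1 p.2 ∩ Set.Icc q.1 q.2 :=
        ⟨⟨le_refl _, le_of_lt (hnd p hp)⟩, ⟨le_of_eq h.symm, h ▸ le_of_lt (hnd q hq)⟩⟩
      have hb : min p.2 q.2 ∈ Set.Icc p.1 p.2 ∩ Set.Icc q.1 q.2 := by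
        constructor
        · exact ⟨le_min (le_of_lt (hnd p hp)) (h ▸ le_of_lt (hnd q hq)), min_le_left _ _⟩
        · exact ⟨le_min (h ▸ le_of_lt (hnd p hp) : q.1 ≤ p.2) (le_of_lt (hnd q hq)), min_le_right _ _⟩
      have heq := hsub ha hb
      have h2 : p.1 < min p.2 q.2 := lt_min (hnd p hp) (h ▸ hnd q hq)
      exact absurd heq (ne_of_lt h2)
    · exact main q hq p hp (Ne.symm hne') (key q hq p hp (Ne.symm hne') h) hpq.symm
  -- conclude
  have hcard : B.card ≤ (Finset.univ.erase (g M)).card := by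
    refine Finset.card_le_card_of_injOn φ ?_ hinj
    intro p hp
    exact Finset.mem_erase.mpr ⟨hφne p hp, Finset.mem_univ _⟩
  simpa [Finset.card_erase_of_mem, Finset.card_univ] using hcard
end

section
/- Let V be a finite set of finite binary strings, let M be a finite set, let N ≥ 0 be a real number, and let B : M → V be a function such that every fiber has at most N elements: |{t ∈ M : B(t) = v}| ≤ N for all v ∈ V. Let V' = {v ∈ V : no proper extension of v belongs to V}. Then ∑_{t∈M} 2^{−|B(t)|} ≤ 2·N·|V'|, where |w| denotes the length of the string w. -/
open Classical in
private lemma prefix_sum_le_two (w : List Bool) (S : Finset (List Bool))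
    (hS : ∀ v ∈ S, v <+: w) :
    ∑ v ∈ S, (2 : ℝ) ^ (-(v.length : ℤ)) ≤ 2 := by
  have hinj : ∀ a ∈ S, ∀ b ∈ S, a.length = b.length → a = b := by
    intro a ha b hb hab
    have hab' : a <+: b :=
      List.prefix_of_prefix_length_le (hS a ha) (hS b hb) (le_of_eq hab)
    exact List.IsPrefix.eq_of_length hab' hab
  have h1 : ∑ v ∈ S, (2 : ℝ) ^ (-(v.length : ℤ))
      = ∑ ℓ ∈ S.image List.length, (2 : ℝ) ^ (-(ℓ : ℤ)) :=
    (Finset.sum_image (f := fun ℓ : ℕ => (2:ℝ) ^ (-(ℓ : ℤ))) hinj).symm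
  have hsub : S.image List.length ⊆ Finset.range (w.length + 1) := by
    intro ℓ hℓ
    simp only [Finset.mem_image] at hℓ
    obtain ⟨v, hv, rfl⟩ := hℓ
    exact Finset.mem_range.mpr (Nat.lt_succ_of_le (hS v hv).length_le)
  have h2 : ∑ ℓ ∈ S.image List.length, (2 : ℝ) ^ (-(ℓ : ℤ))
      ≤ ∑ ℓ ∈ Finset.range (w.length + 1), (2 : ℝ) ^ (-(ℓ : ℤ)) := by
    apply Finset.sum_le_sum_of_subset_of_nonneg hsub
    intro i _ _
    positivity
  have h3 : ∑ ℓ ∈ Finset.range (w.length + 1), (2 : ℝ) ^ (-(ℓ : ℤ)) ≤ 2 := by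
    have := sum_geometric_two_le (w.length + 1)
    convert this using 2 with ℓ
    rw [zpow_neg, zpow_natCast, one_div, inv_pow]
  linarith [h1, h2, h3]

open Classical in
/-- Combinatorial core of Lemma 'pos-1d-bucket-lengths': if `B : M → V` assigns binary
strings with every fiber of size at most `N`, and `V'` is the set of strings in `V` with
no proper extension in `V`, then `∑_{t ∈ M} 2^{-|B(t)|} ≤ 2·N·|V'|`. -/
theorem stmt_11 {α : Type*} (V : Finset (List Bool)) (M : Finset α)
    (B : α → List Bool) (hBV : ∀ t ∈ M, B t ∈ V)
    (N : ℝ) (hN : 0 ≤ N)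
    (hfiber : ∀ v ∈ V, ((M.filter (fun t => B t = v)).card : ℝ) ≤ N) :
    ∑ t ∈ M, (2 : ℝ) ^ (-((B t).length : ℤ)) ≤
      2 * N * (V.filter (fun v => ∀ u ∈ V, v <+: u → u = v)).card := by
  set V' := V.filter (fun v => ∀ u ∈ V, v <+: u → u = v) with hV'
  -- every v ∈ V has a maximal extension in V'
  have hext : ∀ v ∈ V, ∃ w ∈ V', v <+: w := by
    intro v hv
    set S := V.filter (fun u => v <+: u) with hSdef
    have hvS : v ∈ S := Finset.mem_filter.mpr ⟨hv, List.prefix_rfl⟩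
    obtain ⟨w, hwS, hwmax⟩ := S.exists_max_image List.length ⟨v, hvS⟩
    rw [Finset.mem_filter] at hwS
    refine ⟨w, Finset.mem_filter.mpr ⟨hwS.1, ?_⟩, hwS.2⟩
    intro u hu hwu
    have huS : u ∈ S := Finset.mem_filter.mpr ⟨hu, hwS.2.trans hwu⟩
    exact (List.IsPrefix.eq_of_length hwu
      (le_antisymm hwu.length_le (hwmax u huS))).symm
  choose f hf1 hf2 using hext
  -- choose total function
  let g : List Bool → List Bool := fun v => if h : v ∈ V then f v h else v
  have hg1 : ∀ v ∈ V, g v ∈ V' := fun v hv => by simp [g, hv, hf1]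
  have hg2 : ∀ v ∈ V, v <+: g v := fun v hv => by simp [g, hv, hf2]
  -- step 1: group by fibers
  have step1 : ∑ t ∈ M, (2 : ℝ) ^ (-((B t).length : ℤ))
      ≤ ∑ v ∈ V, N * (2 : ℝ) ^ (-(v.length : ℤ)) := by
    rw [← Finset.sum_fiberwise_of_maps_to hBV
      (fun t => (2 : ℝ) ^ (-((B t).length : ℤ)))]
    apply Finset.sum_le_sum
    intro v hv
    have : ∑ t ∈ M.filter (fun t => B t = v), (2 : ℝ) ^ (-((B t).length : ℤ))
        = (M.filter (fun t => B t = v)).card * (2 : ℝ) ^ (-(v.length : ℤ)) := by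
      rw [Finset.sum_congr rfl (fun t ht => by
        rw [(Finset.mem_filter.mp ht).2]), Finset.sum_const, nsmul_eq_mul]
    rw [this]
    have := hfiber v hv
    have hpos : (0:ℝ) ≤ (2 : ℝ) ^ (-(v.length : ℤ)) := by positivity
    exact mul_le_mul_of_nonneg_right this hpos
  -- step 2: group V by g into V'
  have hmaps : ∀ v ∈ V, g v ∈ V' := hg1
  have step2 : ∑ v ∈ V, (2 : ℝ) ^ (-(v.length : ℤ)) ≤ 2 * V'.card := by
    rw [← Finset.sum_fiberwise_of_maps_to hmaps
      (fun v => (2 : ℝ) ^ (-(v.length : ℤ)))]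
    calc ∑ w ∈ V', ∑ v ∈ V.filter (fun v => g v = w), (2 : ℝ) ^ (-(v.length : ℤ))
        ≤ ∑ _w ∈ V', (2:ℝ) := by
          apply Finset.sum_le_sum
          intro w hw
          apply prefix_sum_le_two w
          intro v hv
          rw [Finset.mem_filter] at hv
          exact hv.2 ▸ hg2 v hv.1
      _ = 2 * V'.card := by rw [Finset.sum_const, nsmul_eq_mul, mul_comm]
  calc ∑ t ∈ M, (2 : ℝ) ^ (-((B t).length : ℤ))
      ≤ ∑ v ∈ V, N * (2 : ℝ) ^ (-(v.length : ℤ)) := step1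
    _ = N * ∑ v ∈ V, (2 : ℝ) ^ (-(v.length : ℤ)) := by rw [Finset.mul_sum]
    _ ≤ N * (2 * V'.card) := by
        apply mul_le_mul_of_nonneg_left step2 hN
    _ = 2 * N * V'.card := by ring
end
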